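/- Let X and Y be two distinct cells of the stable partition of a finite (possibly vertex-colored) simple graph G. If H is obtained from G by replacing the edges of the bipartite graph G[X,Y] with the edges of an arbitrary bipartite graph on the same parts X and Y in which every vertex has the same degree as it has in G[X,Y] (leaving all other edges of G unchanged), then C^i_G(u) = C^i_H(u) for every vertex u ∈ V(G) and every i ≥ 0, where C^i_G and C^i_H denote the color-refinement colorings computed in G and in H respectively. -/

import Mathlib

/-!
Every colour class of every round of colour refinement on `G` is a union of stable cells, so it
contains all of `X` or none of it, and likewise for `Y`. Rewiring `G[X,Y]` with the same degrees
therefore leaves the number of neighbours of every vertex in every such class unchanged, and by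
induction on the round the refinement on `G ⊕g H` colours `inl u` and `inr u` alike.
-/

namespace ColorRef

variable {V W : Type}

/-- `crRel G c i u v` means vertices `u` and `v` get the same color in round `i`
of color refinement on `G` with initial coloring `c`. -/
def crRel (G : SimpleGraph V) {α : Type} (c : V → α) : ℕ → V → V → Prop
  | 0 => fun u v => c u = c v
  | (i + 1) => fun u v => crRel G c i u v ∧
      ∀ w : V, {a : V | G.Adj u a ∧ crRel G c i a w}.ncard =
               {a : V | G.Adj v a ∧ crRel G c i a w}.ncard

/-- `u` and `v` get the same color in the stable coloring. -/
def stableRel (G : SimpleGraph V) {α : Type} (c : V → α) (u v : V) : Prop :=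
  ∀ i : ℕ, crRel G c i u v

/-- `X` is a cell of the stable partition of `(G, c)`. -/
def IsCell (G : SimpleGraph V) {α : Type} (c : V → α) (X : Set V) : Prop :=
  ∃ u : V, X = {v : V | stableRel G c u v}

/-- The multisets of round-`i` colors on the two sides of the disjoint union `G ⊕g H`
coincide for every `i`, i.e. color refinement does not distinguish `G` and `H`. -/
def crIndist (G : SimpleGraph V) (cG : V → ℕ) (H : SimpleGraph W) (cH : W → ℕ) : Prop :=
  ∀ (i : ℕ) (w : V ⊕ W),
    {u : V | crRel (G ⊕g H) (Sum.elim cG cH) i (Sum.inl u) w}.ncard =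
    {v : W | crRel (G ⊕g H) (Sum.elim cG cH) i (Sum.inr v) w}.ncard

/-- `G` (with coloring `cG`) is amenable: any finite colored graph `H` that color
refinement fails to distinguish from `G` is color-preservingly isomorphic to `G`. -/
def Amenable (G : SimpleGraph V) (cG : V → ℕ) : Prop :=
  ∀ (W : Type) (_ : Fintype W) (H : SimpleGraph W) (cH : W → ℕ),
    crIndist G cG H cH → ∃ φ : G ≃g H, ∀ v : V, cH (φ v) = cG v

/-! ### Induced subgraphs on cells and between cells -/

def CellEmpty (G : SimpleGraph V) (X : Set V) : Prop := ∀ u ∈ X, ∀ v ∈ X, ¬ G.Adj u v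

def CellComplete (G : SimpleGraph V) (X : Set V) : Prop :=
  ∀ u ∈ X, ∀ v ∈ X, u ≠ v → G.Adj u v

/-- `G[X]` is a perfect matching `mK₂` on `X`. -/
def CellMatching (G : SimpleGraph V) (X : Set V) : Prop :=
  ∀ u ∈ X, {v : V | v ∈ X ∧ G.Adj u v}.ncard = 1

/-- `G[X]` is the complement of a perfect matching on `X`. -/
def CellCoMatching (G : SimpleGraph V) (X : Set V) : Prop :=
  ∀ u ∈ X, {v : V | v ∈ X ∧ v ≠ u ∧ ¬ G.Adj u v}.ncard = 1

/-- `G[X]` is the 5-cycle (a 2-regular graph on 5 vertices). -/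
def CellC5 (G : SimpleGraph V) (X : Set V) : Prop :=
  X.ncard = 5 ∧ ∀ u ∈ X, {v : V | v ∈ X ∧ G.Adj u v}.ncard = 2

/-- Condition A. -/
def CondA (G : SimpleGraph V) {α : Type} (c : V → α) : Prop :=
  ∀ X : Set V, IsCell G c X →
    CellEmpty G X ∨ CellComplete G X ∨ CellMatching G X ∨ CellCoMatching G X ∨ CellC5 G X

def BipEmpty (G : SimpleGraph V) (X Y : Set V) : Prop := ∀ u ∈ X, ∀ v ∈ Y, ¬ G.Adj u v

def BipComplete (G : SimpleGraph V) (X Y : Set V) : Prop := ∀ u ∈ X, ∀ v ∈ Y, G.Adj u v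

/-- `G[X,Y]` is a disjoint union of stars `sK_{1,t}` with centers `X` and leaves `Y`. -/
def BipStars (G : SimpleGraph V) (X Y : Set V) : Prop :=
  (∀ v ∈ Y, {u : V | u ∈ X ∧ G.Adj u v}.ncard = 1) ∧
  (∃ t : ℕ, ∀ u ∈ X, {v : V | v ∈ Y ∧ G.Adj u v}.ncard = t)

/-- `G[X,Y]` is the bipartite complement of a disjoint union of stars with centers `X`. -/
def BipCoStars (G : SimpleGraph V) (X Y : Set V) : Prop :=
  (∀ v ∈ Y, {u : V | u ∈ X ∧ ¬ G.Adj u v}.ncard = 1) ∧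
  (∃ t : ℕ, ∀ u ∈ X, {v : V | v ∈ Y ∧ ¬ G.Adj u v}.ncard = t)

/-- Condition B. -/
def CondB (G : SimpleGraph V) {α : Type} (c : V → α) : Prop :=
  ∀ X Y : Set V, IsCell G c X → IsCell G c Y → X ≠ Y →
    BipEmpty G X Y ∨ BipComplete G X Y ∨
    BipStars G X Y ∨ BipStars G Y X ∨ BipCoStars G X Y ∨ BipCoStars G Y X

/-- A cell is heterogeneous if the graph it induces is neither complete nor empty. -/
def Hetero (G : SimpleGraph V) (X : Set V) : Prop :=
  ¬ CellEmpty G X ∧ ¬ CellComplete G X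

/-- `{X, Y}` is an anisotropic edge of the cell graph. -/
def AnisoEdge (G : SimpleGraph V) {α : Type} (c : V → α) (X Y : Set V) : Prop :=
  IsCell G c X ∧ IsCell G c Y ∧ X ≠ Y ∧ ¬ BipEmpty G X Y ∧ ¬ BipComplete G X Y

/-- An anisotropic path in the cell graph, given as the list of its cells. -/
def AnisoPath (G : SimpleGraph V) {α : Type} (c : V → α) (L : List (Set V)) : Prop :=
  (∀ X ∈ L, IsCell G c X) ∧ L.Nodup ∧ L.Chain' (AnisoEdge G c)

/-- Condition C: no uniform anisotropic path connects two heterogeneous cells. -/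
def CondC (G : SimpleGraph V) {α : Type} (c : V → α) : Prop :=
  ¬ ∃ (X Y : Set V) (L : List (Set V)) (k : ℕ),
      AnisoPath G c (X :: (L ++ [Y])) ∧
      (∀ Z ∈ X :: (L ++ [Y]), Z.ncard = k) ∧
      Hetero G X ∧ Hetero G Y

/-- Condition D: the cell graph has no uniform anisotropic cycle. -/
def CondD (G : SimpleGraph V) {α : Type} (c : V → α) : Prop :=
  ¬ ∃ (X : Set V) (L : List (Set V)) (k : ℕ),
      3 ≤ (X :: L).length ∧
      AnisoPath G c (X :: L) ∧
      List.Chain' (AnisoEdge G c) ((X :: L) ++ [X]) ∧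
      (∀ Z ∈ X :: L, Z.ncard = k)

/-- Condition E: no anisotropic path `X Y₁ … Y_l Z` with `|X| < |Y₁| = … = |Y_l| > |Z|`
and no anisotropic cycle `X Y₁ … Y_l X` with `|X| < |Y₁| = … = |Y_l|`. -/
def CondE (G : SimpleGraph V) {α : Type} (c : V → α) : Prop :=
  (¬ ∃ (X Z : Set V) (Ys : List (Set V)) (k : ℕ),
      Ys ≠ [] ∧
      AnisoPath G c (X :: (Ys ++ [Z])) ∧
      (∀ Y ∈ Ys, Y.ncard = k) ∧ X.ncard < k ∧ Z.ncard < k) ∧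
  (¬ ∃ (X : Set V) (Ys : List (Set V)) (k : ℕ),
      2 ≤ Ys.length ∧
      AnisoPath G c (X :: Ys) ∧
      List.Chain' (AnisoEdge G c) ((X :: Ys) ++ [X]) ∧
      (∀ Y ∈ Ys, Y.ncard = k) ∧ X.ncard < k)

/-- Condition F: no anisotropic path `X Y₁ … Y_l` with `|X| < |Y₁| = … = |Y_l|`
whose last cell `Y_l` is heterogeneous. -/
def CondF (G : SimpleGraph V) {α : Type} (c : V → α) : Prop :=
  ¬ ∃ (X : Set V) (Ys : List (Set V)) (Yl : Set V) (k : ℕ),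
      Ys ≠ [] ∧
      AnisoPath G c (X :: Ys) ∧
      (∀ Y ∈ Ys, Y.ncard = k) ∧ X.ncard < k ∧
      Ys.getLast? = some Yl ∧ Hetero G Yl

/-- The type of cells of the stable partition. -/
def Cell (G : SimpleGraph V) {α : Type} (c : V → α) : Type := {X : Set V // IsCell G c X}

/-- The graph on the cells of `Π_G` formed by the anisotropic edges of the cell graph;
its connected components are the anisotropic components of `C(G)`. -/
def anisoGraph (G : SimpleGraph V) {α : Type} (c : V → α) : SimpleGraph (Cell G c) where
  Adj A B := AnisoEdge G c A.val B.val
  symm := by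
    constructor
    rintro A B ⟨h1, h2, h3, h4, h5⟩
    refine ⟨h2, h1, Ne.symm h3, fun h => h4 ?_, fun h => h5 ?_⟩
    · exact fun u hu v hv hadj => h v hv u hu hadj.symm
    · exact fun u hu v hv => (h v hv u hu).symm
  loopless := ⟨fun A h => h.2.2.1 rfl⟩

/-- Condition G: every anisotropic component is a tree, and rooting it at any cell `R`
of minimum cardinality in its component, `|X| ≤ |Y|` along edges directed away from `R`. -/
def CondG (G : SimpleGraph V) {α : Type} (c : V → α) : Prop :=
  (anisoGraph G c).IsAcyclic ∧
  ∀ R X Y : Cell G c,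
    (∀ Z : Cell G c, (anisoGraph G c).Reachable R Z → R.val.ncard ≤ Z.val.ncard) →
    (anisoGraph G c).Reachable R X →
    (anisoGraph G c).Adj X Y →
    (anisoGraph G c).dist R Y = (anisoGraph G c).dist R X + 1 →
    X.val.ncard ≤ Y.val.ncard

/-- Condition H: every anisotropic component contains at most one heterogeneous cell,
and such a cell has minimum cardinality within its component. -/
def CondH (G : SimpleGraph V) {α : Type} (c : V → α) : Prop :=
  (∀ X Y : Cell G c, Hetero G X.val → Hetero G Y.val →
      (anisoGraph G c).Reachable X Y → X = Y) ∧
  (∀ X Z : Cell G c, Hetero G X.val →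
      (anisoGraph G c).Reachable X Z → X.val.ncard ≤ Z.val.ncard)

/-! ### Matrices, fractional automorphisms and compactness -/

open Classical in
/-- The real adjacency matrix of `G`. -/
noncomputable def adjMat (G : SimpleGraph V) : Matrix V V ℝ :=
  Matrix.of fun u v => if G.Adj u v then (1 : ℝ) else 0

open Classical in
/-- The permutation matrix of a permutation `σ`. -/
noncomputable def permMat (σ : Equiv.Perm V) : Matrix V V ℝ :=
  Matrix.of fun i j => if σ j = i then (1 : ℝ) else 0

def IsDoublyStochastic [Fintype V] (X : Matrix V V ℝ) : Prop :=
  (∀ i j, 0 ≤ X i j) ∧ (∀ i, ∑ j, X i j = 1) ∧ (∀ j, ∑ i, X i j = 1)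

def IsAutomorphism (G : SimpleGraph V) (σ : Equiv.Perm V) : Prop :=
  ∀ u v : V, G.Adj (σ u) (σ v) ↔ G.Adj u v

/-- `X` is a convex combination of permutation matrices of automorphisms of `G`. -/
def IsConvexCombOfAut [Fintype V] (G : SimpleGraph V) (X : Matrix V V ℝ) : Prop :=
  ∃ (s : Finset (Equiv.Perm V)) (w : Equiv.Perm V → ℝ),
    (∀ σ ∈ s, IsAutomorphism G σ) ∧ (∀ σ ∈ s, 0 ≤ w σ) ∧
    (∑ σ ∈ s, w σ) = 1 ∧ X = ∑ σ ∈ s, w σ • permMat σ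

/-- `G` is compact: the polytope of fractional automorphisms of `G` is the convex hull
of the permutation matrices of automorphisms of `G`. -/
def CompactGraph [Fintype V] (G : SimpleGraph V) : Prop :=
  ∀ X : Matrix V V ℝ, IsDoublyStochastic X → adjMat G * X = X * adjMat G →
    IsConvexCombOfAut G X

/-! ### Equitable partitions, Godsil, Tinhofer, refinable, discrete, unigraphs -/

/-- The partition given by the classes of the equivalence `r` is equitable. -/
def Equitable (G : SimpleGraph V) (r : V → V → Prop) : Prop :=
  ∀ u v w : V, r u v →
    {a : V | G.Adj u a ∧ r a w}.ncard = {a : V | G.Adj v a ∧ r a w}.ncard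

/-- The partition given by `r` is the orbit partition of a subgroup of `Aut(G)`. -/
def IsOrbitPartition (G : SimpleGraph V) (r : V → V → Prop) : Prop :=
  ∃ S : Subgroup (Equiv.Perm V), (∀ σ ∈ S, IsAutomorphism G σ) ∧
    (∀ u v : V, r u v ↔ ∃ σ ∈ S, σ u = v)

/-- `G` is a Godsil graph. -/
def Godsil (G : SimpleGraph V) : Prop :=
  ∀ r : V → V → Prop, Equivalence r → Equitable G r → IsOrbitPartition G r

open Classical in
/-- The coloring of the disjoint union after individualizing the pairs in `F`:
the `j`-th individualized pair gets fresh color `some j`, all other vertices keep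
their (uniform) original color `none`. -/
noncomputable def tinColor (F : List (V × W)) : V ⊕ W → Option ℕ
  | Sum.inl u => F.findIdx? (fun p => decide (p.1 = u))
  | Sum.inr v => F.findIdx? (fun p => decide (p.2 = v))

/-- The stable coloring relation on `G ⊕g H` after individualizing the pairs in `F`. -/
def tinRel (G : SimpleGraph V) (H : SimpleGraph W) (F : List (V × W)) :
    (V ⊕ W) → (V ⊕ W) → Prop :=
  stableRel (G ⊕g H) (tinColor F)

/-- The multisets of stable colors on the two sides agree after individualizing `F`. -/
def tinIndist (G : SimpleGraph V) (H : SimpleGraph W) (F : List (V × W)) : Prop :=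
  ∀ w : V ⊕ W,
    {u : V | tinRel G H F (Sum.inl u) w}.ncard =
    {v : W | tinRel G H F (Sum.inr v) w}.ncard

/-- The pair `p` is a legal individualization choice at the stage reached after `F`. -/
def ValidStep (G : SimpleGraph V) (H : SimpleGraph W) (F : List (V × W)) (p : V × W) : Prop :=
  tinIndist G H F ∧
  tinRel G H F (Sum.inl p.1) (Sum.inr p.2) ∧
  2 ≤ {u' : V | tinRel G H F (Sum.inl u') (Sum.inl p.1)}.ncard ∧
  2 ≤ {v' : W | tinRel G H F (Sum.inr v') (Sum.inr p.2)}.ncard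

/-- `F` is a legal sequence of individualization choices of Tinhofer's algorithm. -/
def ValidRun (G : SimpleGraph V) (H : SimpleGraph W) (F : List (V × W)) : Prop :=
  ∀ j : Fin F.length, ValidStep G H (F.take j.val) (F.get j)

/-- After `F`, all stable color classes are singletons in `G` and in `H`. -/
def AllSingletons (G : SimpleGraph V) (H : SimpleGraph W) (F : List (V × W)) : Prop :=
  (∀ u u' : V, tinRel G H F (Sum.inl u) (Sum.inl u') → u = u') ∧
  (∀ v v' : W, tinRel G H F (Sum.inr v) (Sum.inr v') → v = v')

/-- After `F`, Tinhofer's algorithm stops. -/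
def TinTerminal (G : SimpleGraph V) (H : SimpleGraph W) (F : List (V × W)) : Prop :=
  ¬ tinIndist G H F ∨ AllSingletons G H F

/-- After `F`, Tinhofer's algorithm outputs "isomorphic": the color multisets agree,
all classes are singletons, and the color-matching map is an isomorphism. -/
def TinOutputIso (G : SimpleGraph V) (H : SimpleGraph W) (F : List (V × W)) : Prop :=
  tinIndist G H F ∧ AllSingletons G H F ∧
  (∀ (u u' : V) (v v' : W), tinRel G H F (Sum.inl u) (Sum.inr v) →
     tinRel G H F (Sum.inl u') (Sum.inr v') → (G.Adj u u' ↔ H.Adj v v'))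

/-- `G` is a Tinhofer graph: for every finite `H` and every legal complete run of
Tinhofer's individualization-refinement algorithm, the output is correct. -/
def Tinhofer (G : SimpleGraph V) : Prop :=
  ∀ (W : Type) (_ : Fintype W) (H : SimpleGraph W) (F : List (V × W)),
    ValidRun G H F → TinTerminal G H F →
    (TinOutputIso G H F ↔ Nonempty (G ≃g H))

/-- `G` is refinable: its stable partition is the orbit partition of `Aut(G)`. -/
def Refinable (G : SimpleGraph V) : Prop :=
  ∀ u v : V, stableRel G (fun _ => (0 : ℕ)) u v ↔
    ∃ σ : Equiv.Perm V, IsAutomorphism G σ ∧ σ u = v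

/-- `G` is discrete: the stable partition consists of singletons. -/
def Discrete (G : SimpleGraph V) : Prop :=
  ∀ u v : V, stableRel G (fun _ => (0 : ℕ)) u v → u = v

/-- `G` is a unigraph: it is determined up to isomorphism by its degree sequence. -/
def Unigraph (G : SimpleGraph V) : Prop :=
  ∀ (W : Type) (_ : Fintype W) (H : SimpleGraph W),
    (∃ e : V ≃ W, ∀ v : V, {w : W | H.Adj (e v) w}.ncard = {u : V | G.Adj v u}.ncard) →
    Nonempty (G ≃g H)

/-! ### Concrete graphs -/

/-- The cycle graph on `n` vertices. -/
def cycleG (n : ℕ) : SimpleGraph (Fin n) :=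
  SimpleGraph.fromRel (fun u v => (u.val + 1) % n = v.val)

/-- The Petersen graph as the Kneser graph `K(5,2)`. -/
def petersen : SimpleGraph {s : Finset (Fin 5) // s.card = 2} where
  Adj a b := Disjoint a.val b.val
  symm := ⟨fun _ _ h => h.symm⟩
  loopless := by
    constructor
    intro a h
    have h' : Disjoint a.val a.val := h
    rw [disjoint_self] at h'
    have h2 := a.2
    rw [h'] at h2
    simp at h2

/-- The Johnson graph `J(n,2)`. -/
def johnson (n : ℕ) : SimpleGraph {s : Finset (Fin n) // s.card = 2} where
  Adj a b := (a.val ∩ b.val).card = 1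
  symm := by
    constructor
    intro a b h
    have h' : (a.val ∩ b.val).card = 1 := h
    show (b.val ∩ a.val).card = 1
    rwa [Finset.inter_comm]
  loopless := by
    constructor
    intro a h
    have h' : (a.val ∩ a.val).card = 1 := h
    rw [Finset.inter_self, a.2] at h'
    omega

/-- The cell (as an element of the cell type) containing vertex `u`. -/
def vcell (G : SimpleGraph V) {α : Type} (c : V → α) (u : V) : Cell G c :=
  ⟨{v : V | stableRel G c u v}, ⟨u, rfl⟩⟩

/-- `u` and `v` lie in cells of the same anisotropic component. -/
def SameAnisoComp (G : SimpleGraph V) {α : Type} (c : V → α) (u v : V) : Prop :=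
  (anisoGraph G c).Reachable (vcell G c u) (vcell G c v)

theorem crRel_equivalence {α : Type} (G : SimpleGraph V) (c : V → α) (i : ℕ) :
    Equivalence (crRel G c i) := by
  induction i with
  | zero => exact ⟨fun _ => rfl, Eq.symm, Eq.trans⟩
  | succ i ih =>
    exact ⟨fun u => ⟨ih.refl u, fun _ => rfl⟩,
      fun h => ⟨ih.symm h.1, fun w => (h.2 w).symm⟩,
      fun h h' => ⟨ih.trans h.1 h'.1, fun w => (h.2 w).trans (h'.2 w)⟩⟩

theorem IsCell.crRel_of_mem {α : Type} {G : SimpleGraph V} {c : V → α} {X : Set V}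
    (hX : IsCell G c X) {a b : V} (ha : a ∈ X) (hb : b ∈ X) (i : ℕ) : crRel G c i a b := by
  obtain ⟨x, rfl⟩ := hX
  exact (crRel_equivalence G c i).trans ((crRel_equivalence G c i).symm (ha i)) (hb i)

theorem IsCell.eq_setOf_stableRel {α : Type} {G : SimpleGraph V} {c : V → α} {X : Set V}
    (hX : IsCell G c X) {u : V} (hu : u ∈ X) : X = {v | stableRel G c u v} := by
  ext v
  refine ⟨fun hv i => hX.crRel_of_mem hu hv i, fun hv => ?_⟩
  obtain ⟨x, rfl⟩ := hX
  exact fun i => (crRel_equivalence G c i).trans (hu i) (hv i)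

theorem IsCell.eq_of_mem_of_mem {α : Type} {G : SimpleGraph V} {c : V → α} {X Y : Set V}
    (hX : IsCell G c X) (hY : IsCell G c Y) {u : V} (huX : u ∈ X) (huY : u ∈ Y) : X = Y :=
  (hX.eq_setOf_stableRel huX).trans (hY.eq_setOf_stableRel huY).symm

theorem ncard_adj_and_eq_of_eqOn_compl [Finite V] {G H : SimpleGraph V} {u : V} {S : Set V}
    {P : V → Prop} (hout : ∀ a ∉ S, (H.Adj u a ↔ G.Adj u a))
    (hS : {a | a ∈ S ∧ H.Adj u a}.ncard = {a | a ∈ S ∧ G.Adj u a}.ncard)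
    (hP : (∀ a ∈ S, P a) ∨ (∀ a ∈ S, ¬ P a)) :
    {a | H.Adj u a ∧ P a}.ncard = {a | G.Adj u a ∧ P a}.ncard := by
  rcases hP with hP | hP
  · have hinter (K : SimpleGraph V) :
        {a | K.Adj u a ∧ P a} ∩ S = {a | a ∈ S ∧ K.Adj u a} := by
      ext a
      exact ⟨fun h => ⟨h.2, h.1.1⟩, fun h => ⟨⟨h.2, hP a h.1⟩, h.1⟩⟩
    have hdiff : {a | H.Adj u a ∧ P a} \ S = {a | G.Adj u a ∧ P a} \ S := by
      ext a
      exact and_congr_left fun ha => and_congr_left fun _ => hout a ha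
    rw [← Set.ncard_inter_add_ncard_sdiff_eq_ncard _ S (Set.toFinite _),
      ← Set.ncard_inter_add_ncard_sdiff_eq_ncard {a | G.Adj u a ∧ P a} S (Set.toFinite _),
      hinter, hinter, hdiff, hS]
  · congr 1
    ext a
    by_cases ha : a ∈ S
    · simp only [Set.mem_ofPred_eq, hP a ha, and_false]
    · exact and_congr_left fun _ => hout a ha

theorem ncard_sum_adj_inl_and {W : Type} (G : SimpleGraph V) (H : SimpleGraph W) (u : V)
    (R : V ⊕ W → Prop) :
    {a | (G ⊕g H).Adj (Sum.inl u) a ∧ R a}.ncard = {a | G.Adj u a ∧ R (Sum.inl a)}.ncard := by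
  rw [← Set.ncard_image_of_injective {a | G.Adj u a ∧ R (Sum.inl a)} Sum.inl_injective]
  refine congrArg Set.ncard (Set.ext ?_)
  rintro (a | a) <;> simp

theorem ncard_sum_adj_inr_and {W : Type} (G : SimpleGraph V) (H : SimpleGraph W) (u : W)
    (R : V ⊕ W → Prop) :
    {a | (G ⊕g H).Adj (Sum.inr u) a ∧ R a}.ncard = {a | H.Adj u a ∧ R (Sum.inr a)}.ncard := by
  rw [← Set.ncard_image_of_injective {a | H.Adj u a ∧ R (Sum.inr a)} Sum.inr_injective]
  refine congrArg Set.ncard (Set.ext ?_)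
  rintro (a | a) <;> simp

theorem crRel_sum_iff_of_ncard_adj_eq {α : Type} {G H : SimpleGraph V} {c : V → α}
    (hH : ∀ i u w, {a | H.Adj u a ∧ crRel G c i a w}.ncard =
      {a | G.Adj u a ∧ crRel G c i a w}.ncard) (i : ℕ) (x y : V ⊕ V) :
    crRel (G ⊕g H) (Sum.elim c c) i x y ↔
      crRel G c i (Sum.elim id id x) (Sum.elim id id y) := by
  induction i generalizing x y with
  | zero => cases x <;> cases y <;> rfl
  | succ i ih =>
    have hcount (x w : V ⊕ V) :
        {a | (G ⊕g H).Adj x a ∧ crRel (G ⊕g H) (Sum.elim c c) i a w}.ncard =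
          {a | G.Adj (Sum.elim id id x) a ∧ crRel G c i a (Sum.elim id id w)}.ncard := by
      cases x with
      | inl u =>
        rw [ncard_sum_adj_inl_and]
        exact congrArg Set.ncard (Set.ext fun a => and_congr_right fun _ => ih _ w)
      | inr u =>
        rw [ncard_sum_adj_inr_and, ← hH]
        exact congrArg Set.ncard (Set.ext fun a => and_congr_right fun _ => ih _ w)
    simp only [crRel, hcount]
    rw [ih]
    exact and_congr_right fun _ =>
      ⟨fun h w => h (Sum.inl w), fun h w => h (Sum.elim id id w)⟩

theorem ncard_adj_crRel_eq_of_rewire_cells [Finite V] {α : Type} {G H : SimpleGraph V}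
    {c : V → α} {X Y : Set V} (hX : IsCell G c X) (hY : IsCell G c Y)
    (hdegX : ∀ u ∈ X, {v | v ∈ Y ∧ H.Adj u v}.ncard = {v | v ∈ Y ∧ G.Adj u v}.ncard)
    (hdegY : ∀ v ∈ Y, {u | u ∈ X ∧ H.Adj u v}.ncard = {u | u ∈ X ∧ G.Adj u v}.ncard)
    (hsame : ∀ u v, ¬ ((u ∈ X ∧ v ∈ Y) ∨ (u ∈ Y ∧ v ∈ X)) →
      (H.Adj u v ↔ G.Adj u v))
    (i : ℕ) (u w : V) :
    {a | H.Adj u a ∧ crRel G c i a w}.ncard = {a | G.Adj u a ∧ crRel G c i a w}.ncard := by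
  have hcell {Z : Set V} (hZ : IsCell G c Z) :
      (∀ a ∈ Z, crRel G c i a w) ∨ (∀ a ∈ Z, ¬ crRel G c i a w) := by
    by_contra! ⟨⟨a, ha, haw⟩, b, hb, hbw⟩
    exact haw ((crRel_equivalence G c i).trans (hZ.crRel_of_mem ha hb i) hbw)
  by_cases huX : u ∈ X
  · refine ncard_adj_and_eq_of_eqOn_compl (S := Y) (fun a ha => hsame u a ?_) (hdegX u huX)
      (hcell hY)
    rintro (⟨_, haY⟩ | ⟨huY, haX⟩)
    · exact ha haY
    · exact ha (hX.eq_of_mem_of_mem hY huX huY ▸ haX)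
  by_cases huY : u ∈ Y
  · refine ncard_adj_and_eq_of_eqOn_compl (S := X) (fun a ha => hsame u a ?_) ?_ (hcell hX)
    · rintro (⟨h, _⟩ | ⟨_, h⟩)
      exacts [huX h, ha h]
    · simpa only [H.adj_comm, G.adj_comm] using hdegY u huY
  · congr 1
    ext a
    exact and_congr_left fun _ => hsame u a (by rintro (⟨h, _⟩ | ⟨h, _⟩) <;> contradiction)

theorem local_surgery_bip_general {V : Type} [Fintype V] (G H : SimpleGraph V) (c : V → ℕ)
    (X Y : Set V) (hX : IsCell G c X) (hY : IsCell G c Y)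
    (hdegX : ∀ u ∈ X, {v : V | v ∈ Y ∧ H.Adj u v}.ncard =
                      {v : V | v ∈ Y ∧ G.Adj u v}.ncard)
    (hdegY : ∀ v ∈ Y, {u : V | u ∈ X ∧ H.Adj u v}.ncard =
                      {u : V | u ∈ X ∧ G.Adj u v}.ncard)
    (hsame : ∀ u v : V, ¬ ((u ∈ X ∧ v ∈ Y) ∨ (u ∈ Y ∧ v ∈ X)) →
                (H.Adj u v ↔ G.Adj u v)) :
    ∀ (i : ℕ) (u : V), crRel (G ⊕g H) (Sum.elim c c) i (Sum.inl u) (Sum.inr u) := fun i u =>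
  (crRel_sum_iff_of_ncard_adj_eq (ncard_adj_crRel_eq_of_rewire_cells hX hY hdegX hdegY hsame)
    i _ _).mpr ((crRel_equivalence G c i).refl u)

theorem local_surgery_bip {V : Type} [Fintype V] (G H : SimpleGraph V) (c : V → ℕ)
    (X Y : Set V) (hX : IsCell G c X) (hY : IsCell G c Y) (hXY : X ≠ Y)
    (hdegX : ∀ u ∈ X, {v : V | v ∈ Y ∧ H.Adj u v}.ncard =
                      {v : V | v ∈ Y ∧ G.Adj u v}.ncard)
    (hdegY : ∀ v ∈ Y, {u : V | u ∈ X ∧ H.Adj u v}.ncard =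
                      {u : V | u ∈ X ∧ G.Adj u v}.ncard)
    (hsame : ∀ u v : V, ¬ ((u ∈ X ∧ v ∈ Y) ∨ (u ∈ Y ∧ v ∈ X)) →
                (H.Adj u v ↔ G.Adj u v)) :
    ∀ (i : ℕ) (u : V), crRel (G ⊕g H) (Sum.elim c c) i (Sum.inl u) (Sum.inr u) :=
  local_surgery_bip_general G H c X Y hX hY hdegX hdegY hsame

end ColorRef
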